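/- arXiv:2209.08496 — 3 statements merged into one kernel-verified Lean document; each statement's English description precedes it below -/
import Mathlib

section
/- Let f : ℝ → [0,∞) be a probability density on ℝ (∫ f = 1) that is symmetric about a point m (f(m+x) = f(m−x) for all x) and nonincreasing on [m,∞). Then for every c > 0 the function A ↦ ∫_{A−c}^{A+c} f(x) dx attains its maximum over A ∈ ℝ at A = m, i.e. ∫_{A−c}^{A+c} f ≤ ∫_{m−c}^{m+c} f for every A ∈ ℝ. -/
open MeasureTheory

private lemma symm_ext (f : ℝ → ℝ) (m : ℝ) (hf_symm : ∀ x, f (m + x) = f (m - x)) :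
    ∀ x : ℝ, f (2 * m - x) = f x := by
  intro x
  have h := hf_symm (m - x)
  rw [show m + (m - x) = 2 * m - x by ring, show m - (m - x) = x by ring] at h
  exact h

private lemma key_pt (f : ℝ → ℝ) (m : ℝ) (hf_symm : ∀ x, f (m + x) = f (m - x))
    (hf_anti : AntitoneOn f (Set.Ici m)) :
    ∀ x y : ℝ, m ≤ y → |x - m| ≤ y - m → f y ≤ f x := by
  intro x y hy hxy
  have hx : f x = f (m + |x - m|) := by
    rcases le_or_gt m x with h | h
    · rw [abs_of_nonneg (by linarith)]; congr 1; ring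
    · rw [abs_of_neg (by linarith), hf_symm]
      congr 1; ring
  rw [hx]
  exact hf_anti (Set.mem_Ici.mpr (le_add_of_nonneg_right (abs_nonneg _)))
    (Set.mem_Ici.mpr hy) (by linarith)

private lemma refl_int (f : ℝ → ℝ) (m : ℝ) (hf_symm : ∀ x, f (m + x) = f (m - x))
    (a b : ℝ) : ∫ x in a..b, f x = ∫ x in (2*m - b)..(2*m - a), f x := by
  rw [← intervalIntegral.integral_comp_sub_left f (2*m)]
  exact (intervalIntegral.integral_congr (fun x _ => (symm_ext f m hf_symm x).symm))

/-- If `f` is an integrable probability density on `ℝ` that is symmetric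
about `m` and nonincreasing on `[m, ∞)`, then for every `c > 0` the function
`A ↦ ∫_{A-c}^{A+c} f` is maximized at `A = m`. -/
theorem centered_interval_maximizes_mass (f : ℝ → ℝ) (m : ℝ)
    (hf_nonneg : ∀ x, 0 ≤ f x)
    (hf_int : Integrable f)
    (hf_prob : ∫ x, f x = 1)
    (hf_symm : ∀ x, f (m + x) = f (m - x))
    (hf_anti : AntitoneOn f (Set.Ici m)) :
    ∀ c > (0 : ℝ), ∀ A : ℝ,
      ∫ x in (A - c)..(A + c), f x ≤ ∫ x in (m - c)..(m + c), f x := by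
  intro c hc
  have hii : ∀ u v : ℝ, IntervalIntegrable f volume u v := fun u v =>
    hf_int.intervalIntegrable
  have main : ∀ A : ℝ, m ≤ A →
      ∫ x in (A - c)..(A + c), f x ≤ ∫ x in (m - c)..(m + c), f x := by
    intro A hA
    set a := A - m with ha
    have ha0 : 0 ≤ a := by rw [ha]; linarith
    have hii' : ∀ u v : ℝ, IntervalIntegrable (fun x => f (x + a)) volume u v := by
      intro u v
      exact (hf_int.comp_add_right a).intervalIntegrable
    rcases le_or_gt (m + c) (A - c) with h | h
    · -- far case : a ≥ 2c, shift the whole interval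
      have h2c : 2 * c ≤ a := by rw [ha]; linarith
      have shift : ∫ x in (A - c)..(A + c), f x = ∫ x in (m - c)..(m + c), f (x + a) := by
        rw [intervalIntegral.integral_comp_add_right]
        congr 1 <;> (try simp only [ha]) <;> ring
      rw [shift]
      apply intervalIntegral.integral_mono_on (by linarith) (hii' _ _) (hii _ _)
      intro x hx
      apply key_pt f m hf_symm hf_anti
      · have := hx.1; linarith
      · rw [abs_le]
        constructor
        · have := hx.1; linarith
        · linarith
    · -- near case : a < 2c
      have h2c : a ≤ 2 * c := by rw [ha]; linarith
      have split1 : ∫ x in (m-c)..(m+c), f x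
          = (∫ x in (m-c)..(A-c), f x) + ∫ x in (A-c)..(m+c), f x :=
        (intervalIntegral.integral_add_adjacent_intervals (hii _ _) (hii _ _)).symm
      have split2 : ∫ x in (A-c)..(A+c), f x
          = (∫ x in (A-c)..(m+c), f x) + ∫ x in (m+c)..(A+c), f x :=
        (intervalIntegral.integral_add_adjacent_intervals (hii _ _) (hii _ _)).symm
      have key : ∫ x in (m+c)..(A+c), f x ≤ ∫ x in (m-c)..(A-c), f x := by
        have e1 : ∫ x in (m-c)..(A-c), f x = ∫ x in (m+c-a)..(m+c), f x := by
          rw [refl_int f m hf_symm]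
          congr 1 <;> (try simp only [ha]) <;> ring
        have e2 : ∫ x in (m+c)..(A+c), f x = ∫ x in (m+c-a)..(m+c), f (x + a) := by
          rw [intervalIntegral.integral_comp_add_right]
          congr 1 <;> (try simp only [ha]) <;> ring
        rw [e1, e2]
        apply intervalIntegral.integral_mono_on (by linarith) (hii' _ _) (hii _ _)
        intro x hx
        apply key_pt f m hf_symm hf_anti
        · have := hx.1; linarith
        · rw [abs_le]
          constructor
          · have := hx.1; linarith
          · linarith
      linarith [split1, split2, key]
  intro A
  rcases le_or_gt m A with hA | hA
  · exact main A hA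
  · have hrefl : ∫ x in (A - c)..(A + c), f x
        = ∫ x in ((2*m - A) - c)..((2*m - A) + c), f x := by
      rw [refl_int f m hf_symm]
      congr 1 <;> ring
    rw [hrefl]
    exact main (2*m - A) (by linarith)
end

section
/- Let Π be a probability measure on ℝ × (0,∞) (the posterior law of (ν,τ) given the data), written as the composition of its second marginal (the law of τ) with a conditional kernel giving, for each τ, the conditional law of ν. Assume that for (almost) every τ the conditional law of ν given τ has a Lebesgue density that is symmetric about a point m and nonincreasing on [m,∞), where m does not depend on τ (so m equals the mean E(ν)). For A ∈ ℝ, B > 0 and δ ∈ (0,1) let G_{A,B,δ} = {(ν,τ) ∈ ℝ×(0,∞) : Φ((A+B−ν)/τ) − Φ((A−B−ν)/τ) ≥ 1−δ}, where Φ is the standard normal CDF. Then for every A ∈ ℝ and B > 0 one has Π(G_{A,B,δ}) ≤ Π(G_{m,B,δ}); consequently the shortest interval [A−B, A+B] with Π(G_{A,B,δ}) ≥ 1−α can be taken centered at A = m. -/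
/-!
Disintegrating `post` along `τ`, it suffices to compare, for each fixed `τ`, the conditional
masses of the `ν`-sections of `G_{A,B,δ}` and `G_{m,B,δ}`. The probability that `N(u, τ²)` lies
in `[-B, B]` decreases in `|u|`, so the section of `G_{m,B,δ}` is an interval centred at `m`
(possibly empty or all of `ℝ`) and that of `G_{A,B,δ}` is its translate by `A - m`. By the
layer-cake formula the conditional mass of a set `E` is `∫ Leb ({f > s} ∩ E) ds`, and the
superlevel sets of a symmetric unimodal density are intervals centred at `m` as well. Two sets
centred at `m` are nested, so a translate of one meets the other in measure at most the smaller
of their measures, which is the measure of their intersection.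
-/

open MeasureTheory ProbabilityTheory

/-- The standard normal cumulative distribution function. -/
noncomputable def stdNormCDF (x : ℝ) : ℝ := ((gaussianReal 0 1) (Set.Iic x)).toReal

/-- The set `G_{A,B,δ} = {(ν,τ) ∈ ℝ×(0,∞) : Φ((A+B−ν)/τ) − Φ((A−B−ν)/τ) ≥ 1−δ}`. -/
def Gset (A B δ : ℝ) : Set (ℝ × ℝ) :=
  {p | 0 < p.2 ∧ 1 - δ ≤ stdNormCDF ((A + B - p.1) / p.2) - stdNormCDF ((A - B - p.1) / p.2)}

open Set

section Rearrangement

variable {E : Type*} [SeminormedAddCommGroup E]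

def IsRadialLowerSet (m : E) (V : Set E) : Prop :=
  ∀ ⦃x y⦄, ‖x - m‖ ≤ ‖y - m‖ → y ∈ V → x ∈ V

def RadiallyAntitone (m : E) (g : E → ℝ) : Prop :=
  ∀ ⦃x y⦄, ‖x - m‖ ≤ ‖y - m‖ → g y ≤ g x

variable {m : E} {S V : Set E} {g : E → ℝ}

theorem IsRadialLowerSet.subset_or_subset (hS : IsRadialLowerSet m S)
    (hV : IsRadialLowerSet m V) : S ⊆ V ∨ V ⊆ S := by
  refine or_iff_not_imp_left.2 fun hSV y hyV => ?_
  obtain ⟨x, hxS, hxV⟩ := not_subset.1 hSV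
  rcases le_total ‖x - m‖ ‖y - m‖ with hxy | hyx
  · exact absurd (hV hxy hyV) hxV
  · exact hS hyx hxS

theorem RadiallyAntitone.isRadialLowerSet_setOf_lt (hg : RadiallyAntitone m g) (c : ℝ) :
    IsRadialLowerSet m {x | c < g x} :=
  fun _ _ hxy hy => lt_of_lt_of_le hy (hg hxy)

theorem RadiallyAntitone.isRadialLowerSet_setOf_le (hg : RadiallyAntitone m g) (c : ℝ) :
    IsRadialLowerSet m {x | c ≤ g x} :=
  fun _ _ hxy hy => le_trans hy (hg hxy)

variable [MeasurableSpace E]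

theorem IsRadialLowerSet.measurableSet [OpensMeasurableSpace E] (hV : IsRadialLowerSet m V) :
    MeasurableSet V := by
  have hW : IsLowerSet {s : ℝ | ∃ y ∈ V, s ≤ ‖y - m‖} :=
    fun _ _ hst ⟨y, hy, hty⟩ => ⟨y, hy, hst.trans hty⟩
  have hV_eq : V = (‖· - m‖) ⁻¹' {s : ℝ | ∃ y ∈ V, s ≤ ‖y - m‖} :=
    ext fun x => ⟨fun hx => ⟨x, hx, le_rfl⟩, fun ⟨y, hy, hxy⟩ => hV hxy hy⟩
  rw [hV_eq]
  exact hW.ordConnected.measurableSet.preimage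
    (continuous_norm.comp (continuous_id.sub continuous_const)).measurable

theorem RadiallyAntitone.measurable [OpensMeasurableSpace E] (hg : RadiallyAntitone m g) :
    Measurable g :=
  measurable_of_Ioi fun c => (hg.isRadialLowerSet_setOf_lt c).measurableSet

theorem IsRadialLowerSet.measure_inter_preimage_sub_le [MeasurableAdd E] (μ : Measure E)
    [μ.IsAddRightInvariant] (hS : IsRadialLowerSet m S) (hV : IsRadialLowerSet m V) (a : E) :
    μ (S ∩ (· - a) ⁻¹' V) ≤ μ (S ∩ V) := by
  have hshift : μ ((· - a) ⁻¹' V) = μ V := by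
    simpa only [sub_eq_add_neg] using measure_preimage_add_right μ (-a) V
  rcases hS.subset_or_subset hV with hSV | hVS
  · rw [inter_eq_left.2 hSV]
    exact measure_mono inter_subset_left
  · rw [inter_eq_right.2 hVS, ← hshift]
    exact measure_mono inter_subset_right

theorem RadiallyAntitone.setLIntegral_preimage_sub_le [OpensMeasurableSpace E] [MeasurableAdd E]
    (μ : Measure E) [μ.IsAddRightInvariant] (hg : RadiallyAntitone m g) (hg0 : ∀ x, 0 ≤ g x)
    (hV : IsRadialLowerSet m V) (a : E) :
    ∫⁻ x in (· - a) ⁻¹' V, ENNReal.ofReal (g x) ∂μ ≤ ∫⁻ x in V, ENNReal.ofReal (g x) ∂μ := by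
  simp only [lintegral_eq_lintegral_meas_lt _ (.of_forall hg0) hg.measurable.aemeasurable]
  refine lintegral_mono fun c => ?_
  rw [Measure.restrict_apply (hg.isRadialLowerSet_setOf_lt c).measurableSet,
    Measure.restrict_apply (hg.isRadialLowerSet_setOf_lt c).measurableSet]
  exact (hg.isRadialLowerSet_setOf_lt c).measure_inter_preimage_sub_le μ hV a

end Rearrangement

theorem radiallyAntitone_of_symmetric_of_antitoneOn {m : ℝ} {g : ℝ → ℝ}
    (hsymm : ∀ x, g (m + x) = g (m - x)) (hanti : AntitoneOn g (Ici m)) : RadiallyAntitone m g := by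
  have hg : ∀ x, g x = g (m + |x - m|) := by
    intro x
    rcases abs_cases (x - m) with ⟨h, -⟩ | ⟨h, -⟩ <;> rw [h]
    · congr 1; ring
    · rw [hsymm]; congr 1; ring
  intro x y hxy
  rw [hg x, hg y]
  simp only [Real.norm_eq_abs] at hxy
  exact hanti (by simp) (by simp) (by linarith)

theorem stdNormCDF_eq_cdf : stdNormCDF = cdf (gaussianReal 0 1) := by
  funext x
  rw [cdf_eq_real]
  rfl

theorem monotone_stdNormCDF : Monotone stdNormCDF :=
  stdNormCDF_eq_cdf ▸ monotone_cdf _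

theorem gaussianReal_Ioc_eq (a b : ℝ) :
    gaussianReal 0 1 (Ioc a b) = ENNReal.ofReal (stdNormCDF b - stdNormCDF a) := by
  rw [stdNormCDF_eq_cdf, ← StieltjesFunction.measure_Ioc, measure_cdf]

theorem stdNormCDF_neg (x : ℝ) : stdNormCDF (-x) = 1 - stdNormCDF x := by
  have hsymm : gaussianReal 0 1 (Iic (-x)) = gaussianReal 0 1 (Ici x) := by
    conv_lhs => rw [← neg_zero, ← gaussianReal_map_neg (μ := 0)]
    rw [Measure.map_apply measurable_neg measurableSet_Iic]
    congr 1
    simp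
  have hatom : gaussianReal 0 1 (Ici x) = gaussianReal 0 1 (Ioi x) :=
    measure_congr (Ioi_ae_eq_Ici' (gaussianReal_absolutelyContinuous 0 one_ne_zero
      (Real.volume_singleton))).symm
  rw [stdNormCDF, stdNormCDF, hsymm, hatom, ← compl_Iic, prob_compl_eq_one_sub measurableSet_Iic,
    ENNReal.toReal_sub_of_le prob_le_one ENNReal.one_ne_top, ENNReal.toReal_one]

theorem gaussianPDF_le_gaussianPDF {μ μ' x : ℝ} (v : NNReal) (h : (x - μ') ^ 2 ≤ (x - μ) ^ 2) :
    gaussianPDF μ v x ≤ gaussianPDF μ' v x := by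
  simp only [gaussianPDF, gaussianPDFReal]
  gcongr

theorem gaussianReal_Ioc_add_le {a s : ℝ} (b : ℝ) (hs : 0 ≤ s) (ha : -s ≤ 2 * a) :
    gaussianReal 0 1 (Ioc (a + s) (b + s)) ≤ gaussianReal 0 1 (Ioc a b) := by
  have hshift : gaussianReal 0 1 (Ioc (a + s) (b + s)) = gaussianReal (-s) 1 (Ioc a b) := by
    conv_lhs => rw [← neg_add_cancel s, ← gaussianReal_map_add_const]
    rw [Measure.map_apply (measurable_add_const s) measurableSet_Ioc]
    congr 1
    simp
  rw [hshift, gaussianReal_apply _ one_ne_zero, gaussianReal_apply _ one_ne_zero]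
  refine setLIntegral_mono (measurable_gaussianPDF 0 1) fun x hx => ?_
  exact gaussianPDF_le_gaussianPDF 1 (by nlinarith [hx.1])

/-- The probability that `N(u, t²)` lies in `[-B, B]`. -/
noncomputable def normalCoverage (B t u : ℝ) : ℝ :=
  stdNormCDF ((B - u) / t) - stdNormCDF ((-B - u) / t)

theorem normalCoverage_eq (B t u : ℝ) :
    normalCoverage B t u = stdNormCDF ((u + B) / t) - stdNormCDF ((u - B) / t) := by
  have e1 : (B - u) / t = -((u - B) / t) := by ring
  have e2 : (-B - u) / t = -((u + B) / t) := by ring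
  rw [normalCoverage, e1, e2, stdNormCDF_neg, stdNormCDF_neg]
  ring

theorem normalCoverage_neg (B t u : ℝ) : normalCoverage B t (-u) = normalCoverage B t u := by
  rw [normalCoverage_eq B t u, normalCoverage]
  ring_nf

theorem antitoneOn_normalCoverage {B t : ℝ} (hB : 0 ≤ B) (ht : 0 < t) :
    AntitoneOn (normalCoverage B t) (Ici 0) := by
  intro p hp q _ hpq
  have hpq' : (p - B) / t ≤ (q - B) / t := by gcongr
  have hs : 0 ≤ 2 * B / t := by positivity
  have ha : -(2 * B / t) ≤ 2 * ((p - B) / t) := by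
    rw [show 2 * ((p - B) / t) = -(2 * B / t) + 2 * (p / t) by ring]
    linarith [div_nonneg hp ht.le]
  -- The difference of the two coverages is the Gaussian mass of `Ioc ((p-B)/t) ((q-B)/t)`
  -- minus that of its translate by `2B/t`.
  have key := ENNReal.toReal_mono (measure_ne_top _ _) <|
    gaussianReal_Ioc_add_le ((q - B) / t) hs ha
  rw [gaussianReal_Ioc_eq, gaussianReal_Ioc_eq, ENNReal.toReal_ofReal, ENNReal.toReal_ofReal]
    at key
  · rw [normalCoverage_eq, normalCoverage_eq]
    ring_nf at key ⊢
    linarith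
  · exact sub_nonneg.2 (monotone_stdNormCDF hpq')
  · exact sub_nonneg.2 (monotone_stdNormCDF (by linarith))

theorem radiallyAntitone_normalCoverage_sub {B t : ℝ} (hB : 0 ≤ B) (ht : 0 < t) (m : ℝ) :
    RadiallyAntitone m fun x => normalCoverage B t (x - m) := by
  refine radiallyAntitone_of_symmetric_of_antitoneOn (fun x => ?_)
    fun x hx y hy hxy => ?_
  · rw [add_sub_cancel_left, sub_sub_cancel_left, normalCoverage_neg]
  · exact antitoneOn_normalCoverage hB ht (mem_Ici.2 (sub_nonneg.2 hx))
      (mem_Ici.2 (sub_nonneg.2 hy)) (by linarith)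

theorem measurableSet_Gset (A B δ : ℝ) : MeasurableSet (Gset A B δ) := by
  have hΦ := monotone_stdNormCDF.measurable
  exact (measurableSet_lt measurable_const measurable_snd).inter
    (measurableSet_le measurable_const ((hΦ.comp (by fun_prop)).sub (hΦ.comp (by fun_prop))))

theorem setOf_mk_mem_Gset {t : ℝ} (ht : 0 < t) (A B δ m : ℝ) :
    {x | (x, t) ∈ Gset A B δ} =
      (· - (A - m)) ⁻¹' {x | 1 - δ ≤ normalCoverage B t (x - m)} := by
  ext x
  simp only [Gset, mem_ofPred_eq, mem_preimage, ht, true_and, normalCoverage]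
  ring_nf

theorem bayesian_tolerance_centered_at_symmetry_point_general
    (post : Measure (ℝ × ℝ))
    (μτ : Measure ℝ) [IsProbabilityMeasure μτ] (κ : Kernel ℝ ℝ) [IsMarkovKernel κ]
    (hpost : post = (μτ ⊗ₘ κ).map Prod.swap)
    (hpos : ∀ᵐ t ∂μτ, 0 < t)
    (m : ℝ) (f : ℝ → ℝ → ℝ)
    (hnonneg : ∀ t x, 0 ≤ f t x)
    (hdens : ∀ᵐ t ∂μτ, κ t = volume.withDensity fun x => ENNReal.ofReal (f t x))
    (hsymm : ∀ᵐ t ∂μτ, ∀ x, f t (m + x) = f t (m - x))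
    (hanti : ∀ᵐ t ∂μτ, AntitoneOn (f t) (Set.Ici m))
    (δ α : ℝ) :
    ∀ A B : ℝ, 0 < B →
      post (Gset A B δ) ≤ post (Gset m B δ) ∧
      (ENNReal.ofReal (1 - α) ≤ post (Gset A B δ) →
        ENNReal.ofReal (1 - α) ≤ post (Gset m B δ)) := by
  intro A B hB
  have hdisint : ∀ C, post (Gset C B δ) = ∫⁻ t, κ t {x | (x, t) ∈ Gset C B δ} ∂μτ := fun C => by
    rw [hpost, Measure.map_apply measurable_swap (measurableSet_Gset C B δ),
      Measure.compProd_apply (measurable_swap (measurableSet_Gset C B δ))]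
    rfl
  have hle : post (Gset A B δ) ≤ post (Gset m B δ) := by
    rw [hdisint, hdisint]
    refine lintegral_mono_ae ?_
    filter_upwards [hpos, hdens, hsymm, hanti] with t ht hκ hs ha
    have hV := (radiallyAntitone_normalCoverage_sub hB.le ht m).isRadialLowerSet_setOf_le (1 - δ)
    rw [setOf_mk_mem_Gset ht A B δ m, setOf_mk_mem_Gset ht m B δ m, sub_self, hκ,
      withDensity_apply', withDensity_apply']
    have hf := radiallyAntitone_of_symmetric_of_antitoneOn hs ha
    simpa using hf.setLIntegral_preimage_sub_le volume (hnonneg t) hV (A - m)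
  exact ⟨hle, fun h => h.trans hle⟩

/-- Let `post` be a probability measure on `ℝ × (0,∞)` (the posterior law
of `(ν,τ)`), written as the composition of its second marginal `μτ` (the law of `τ`) with a
conditional kernel `κ` giving the conditional law of `ν` given `τ`. If for a.e. `τ` the
conditional law of `ν` has a Lebesgue density that is symmetric about a point `m` (not
depending on `τ`) and nonincreasing on `[m,∞)`, then `Π(G_{A,B,δ}) ≤ Π(G_{m,B,δ})` for all
`A`, `B > 0`; consequently the shortest interval `[A−B, A+B]` with `Π(G_{A,B,δ}) ≥ 1−α`
can be taken centered at `A = m`. -/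
theorem bayesian_tolerance_centered_at_symmetry_point
    (post : Measure (ℝ × ℝ)) [IsProbabilityMeasure post]
    (μτ : Measure ℝ) [IsProbabilityMeasure μτ] (κ : Kernel ℝ ℝ) [IsMarkovKernel κ]
    (hμτ : μτ = post.map Prod.snd)
    (hpost : post = (μτ ⊗ₘ κ).map Prod.swap)
    (hpos : ∀ᵐ t ∂μτ, 0 < t)
    (m : ℝ) (f : ℝ → ℝ → ℝ)
    (hnonneg : ∀ t x, 0 ≤ f t x)
    (hdens : ∀ᵐ t ∂μτ, κ t = volume.withDensity fun x => ENNReal.ofReal (f t x))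
    (hsymm : ∀ᵐ t ∂μτ, ∀ x, f t (m + x) = f t (m - x))
    (hanti : ∀ᵐ t ∂μτ, AntitoneOn (f t) (Set.Ici m))
    (δ α : ℝ) (hδ : δ ∈ Set.Ioo (0 : ℝ) 1) (hα : α ∈ Set.Ioo (0 : ℝ) 1) :
    ∀ A B : ℝ, 0 < B →
      post (Gset A B δ) ≤ post (Gset m B δ) ∧
      (ENNReal.ofReal (1 - α) ≤ post (Gset A B δ) →
        ENNReal.ofReal (1 - α) ≤ post (Gset m B δ)) :=
  bayesian_tolerance_centered_at_symmetry_point_general post μτ κ hpost hpos m f hnonneg hdens hsymm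
    hanti δ α
end

section
/- Let Q_θ, for θ ∈ Θ, be probability measures on ℝ with cumulative distribution functions F_θ, and let Q_{θ+}^{-1}(u) = sup{z : F_θ(z−) ≤ u} denote the right-continuous quantile function. Let L be a real-valued statistic, δ, α ∈ (0,1). Then [L(X), ∞) is a frequentist (δ,α)-tolerance interval, i.e. P_θ(x : Q_θ([L(x), ∞)) ≥ 1−δ) ≥ 1−α for all θ, if and only if L(X) ≤ Q_{θ+}^{-1}(δ) with P_θ-probability at least 1−α for all θ, i.e. [L(X), ∞) is a one-sided (1−α)-confidence interval for Q_{θ+}^{-1}(δ). -/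
/-!
The two events coincide for every `x` and `θ`. Indeed `1 - δ ≤ Q_θ([t, ∞))` says
`F_θ(t−) ≤ δ`, and since `z ↦ F_θ(z−)` is monotone and left-continuous, the set
`{z : F_θ(z−) ≤ δ}` is the closed half-line `(-∞, Q_{θ+}⁻¹(δ)]`; for `0 < δ < 1` it is
nonempty and bounded above, so its supremum is a genuine real number.
-/

open MeasureTheory Set Filter Topology
open scoped ENNReal

theorem measure_Iio_le_of_forall_lt {α : Type*} [LinearOrder α] [TopologicalSpace α]
    [OrderTopology α] [DenselyOrdered α] [NoMinOrder α] [FirstCountableTopology α]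
    [MeasurableSpace α] (μ : Measure α) {t : α} {c : ℝ≥0∞} (h : ∀ w < t, μ (Iio w) ≤ c) :
    μ (Iio t) ≤ c := by
  obtain ⟨u, hu_mono, hu_lt, hu_lim⟩ := exists_seq_strictMono_tendsto t
  rw [← (isLUB_of_tendsto_atTop hu_mono.monotone hu_lim).iUnion_Iio_eq,
    Monotone.measure_iUnion fun m n hmn => Iio_subset_Iio (hu_mono.monotone hmn)]
  exact iSup_le fun n => h _ (hu_lt n)

section FiniteMeasure

variable {μ : Measure ℝ} [IsFiniteMeasure μ]

theorem tendsto_measureReal_Iio_atBot : Tendsto (fun z => μ.real (Iio z)) atBot (𝓝 0) := by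
  have h := tendsto_measure_iInter_atBot (μ := μ) (fun z => measurableSet_Iio.nullMeasurableSet)
    monotone_Iio ⟨0, measure_ne_top μ _⟩
  rw [iInter_Iio_of_not_bddBelow_range (by simp), measure_empty] at h
  exact (ENNReal.tendsto_toReal ENNReal.zero_ne_top).comp h

theorem tendsto_measureReal_Iic_atTop :
    Tendsto (fun z => μ.real (Iic z)) atTop (𝓝 (μ.real univ)) :=
  (ENNReal.tendsto_toReal (measure_ne_top μ _)).comp (tendsto_measure_Iic_atTop μ)

theorem nonempty_setOf_measureReal_Iio_le {δ : ℝ} (hδ : 0 < δ) :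
    {z | μ.real (Iio z) ≤ δ}.Nonempty :=
  (tendsto_measureReal_Iio_atBot.eventually (eventually_le_nhds hδ)).exists

theorem bddAbove_setOf_measureReal_Iio_le {δ : ℝ} (hδ : δ < μ.real univ) :
    BddAbove {z | μ.real (Iio z) ≤ δ} := by
  obtain ⟨z₀, hz₀⟩ := (tendsto_measureReal_Iic_atTop.eventually (eventually_gt_nhds hδ)).exists
  refine ⟨z₀, fun z hz => le_of_not_gt fun hlt => ?_⟩
  have : μ.real (Iic z₀) ≤ μ.real (Iio z) := measureReal_mono (Iic_subset_Iio.mpr hlt)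
  exact (hz₀.trans_le this).not_ge hz

theorem measureReal_Iio_le_iff_le_sSup {δ : ℝ} (hδ₀ : 0 < δ) (hδ₁ : δ < μ.real univ) (t : ℝ) :
    μ.real (Iio t) ≤ δ ↔ t ≤ sSup {z | μ.real (Iio z) ≤ δ} := by
  refine ⟨fun ht => le_csSup (bddAbove_setOf_measureReal_Iio_le hδ₁) ht, fun ht => ?_⟩
  have hle_ofReal : μ (Iio t) ≤ ENNReal.ofReal δ := measure_Iio_le_of_forall_lt μ fun w hw => by
    obtain ⟨s, hs, hws⟩ :=
      exists_lt_of_lt_csSup (nonempty_setOf_measureReal_Iio_le hδ₀) (hw.trans_le ht)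
    calc μ (Iio w) ≤ μ (Iio s) := measure_mono (Iio_subset_Iio hws.le)
      _ ≤ ENNReal.ofReal δ := (ENNReal.le_ofReal_iff_toReal_le (measure_ne_top _ _) hδ₀.le).mpr hs
  exact ENNReal.toReal_le_of_le_ofReal hδ₀.le hle_ofReal

end FiniteMeasure

theorem one_sub_le_probReal_Ici_iff {μ : Measure ℝ} [IsProbabilityMeasure μ] {δ t : ℝ} :
    1 - δ ≤ μ.real (Ici t) ↔ μ.real (Iio t) ≤ δ := by
  rw [← compl_Ici, probReal_compl_eq_one_sub measurableSet_Ici, sub_le_comm]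

theorem lower_tolerance_iff_confidence_for_quantile_general
    {Θ 𝓧 : Type*} [MeasurableSpace 𝓧]
    (P : Θ → Measure 𝓧) (Q : Θ → Measure ℝ) [∀ θ, IsProbabilityMeasure (Q θ)]
    (L : 𝓧 → ℝ) (δ α : ℝ) (hδ : δ ∈ Set.Ioo (0 : ℝ) 1) :
    (∀ θ, ENNReal.ofReal (1 - α) ≤ P θ {x | 1 - δ ≤ (Q θ (Set.Ici (L x))).toReal}) ↔
    (∀ θ, ENNReal.ofReal (1 - α) ≤
      P θ {x | L x ≤ sSup {z : ℝ | (Q θ (Set.Iio z)).toReal ≤ δ}}) := by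
  have hδ₁ (θ : Θ) : δ < (Q θ).real univ := by simpa using hδ.2
  have h_events (θ : Θ) : {x | 1 - δ ≤ (Q θ (Ici (L x))).toReal} =
      {x | L x ≤ sSup {z : ℝ | (Q θ (Iio z)).toReal ≤ δ}} := by
    ext x
    exact one_sub_le_probReal_Ici_iff.trans (measureReal_Iio_le_iff_le_sSup hδ.1 (hδ₁ θ) (L x))
  simp_rw [h_events]

/-- `[L(X), ∞)` is a frequentist `(δ,α)`-tolerance interval if and only if
it is a one-sided `(1−α)`-confidence interval for the right-continuous quantile
`Q_{θ+}⁻¹(δ) = sup {z : F_θ(z−) ≤ δ}`, where `F_θ(z−) = Q_θ((−∞, z))`. -/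
theorem lower_tolerance_iff_confidence_for_quantile
    {Θ 𝓧 : Type*} [MeasurableSpace 𝓧]
    (P : Θ → Measure 𝓧) (Q : Θ → Measure ℝ) [∀ θ, IsProbabilityMeasure (Q θ)]
    (L : 𝓧 → ℝ) (δ α : ℝ) (hδ : δ ∈ Set.Ioo (0 : ℝ) 1) (hα : α ∈ Set.Ioo (0 : ℝ) 1) :
    (∀ θ, ENNReal.ofReal (1 - α) ≤ P θ {x | 1 - δ ≤ (Q θ (Set.Ici (L x))).toReal}) ↔
    (∀ θ, ENNReal.ofReal (1 - α) ≤
      P θ {x | L x ≤ sSup {z : ℝ | (Q θ (Set.Iio z)).toReal ≤ δ}}) :=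
  lower_tolerance_iff_confidence_for_quantile_general P Q L δ α hδ
end
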